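/- For any square complex matrix G and t ≥ 1, ∂(‖G^(t)‖_F²)/∂G = 2^t · G (G* G)^{2^{t-1} − 1}. -/

import Mathlib

open Matrix

attribute [local instance] Matrix.normedAddCommGroup Matrix.normedSpace

/-- Frobenius norm of a complex matrix. -/
noncomputable def frobNorm {m n : Type*} [Fintype m] [Fintype n] (G : Matrix m n ℂ) : ℝ :=
  Real.sqrt (∑ i, ∑ j, ‖G i j‖ ^ 2)

/-- `gramSq X t` is the Gram iterate `X⁽ᵗ⁺¹⁾` of the sequence `X⁽¹⁾ = X`,
`X⁽ᵗ⁺¹⁾ = (X⁽ᵗ⁾)ᴴ X⁽ᵗ⁾`, for a square matrix `X`. -/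
noncomputable def gramSq {n : ℕ} (X : Matrix (Fin n) (Fin n) ℂ) :
    ℕ → Matrix (Fin n) (Fin n) ℂ
  | 0 => X
  | t + 1 => (gramSq X t)ᴴ * gramSq X t

section Aux

variable {n : ℕ}

/-- Matrix multiplication as a real-bilinear continuous map. -/
noncomputable def mulB (n : ℕ) :
    Matrix (Fin n) (Fin n) ℂ →L[ℝ] Matrix (Fin n) (Fin n) ℂ →L[ℝ] Matrix (Fin n) (Fin n) ℂ :=
  LinearMap.toContinuousLinearMap
    ((LinearMap.toContinuousLinearMap :
        (Matrix (Fin n) (Fin n) ℂ →ₗ[ℝ] Matrix (Fin n) (Fin n) ℂ) ≃ₗ[ℝ]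
          (Matrix (Fin n) (Fin n) ℂ →L[ℝ] Matrix (Fin n) (Fin n) ℂ)).toLinearMap ∘ₗ
      LinearMap.mul ℝ (Matrix (Fin n) (Fin n) ℂ))

@[simp] lemma mulB_apply (A B : Matrix (Fin n) (Fin n) ℂ) : mulB n A B = A * B := rfl

/-- Conjugate transpose as a real-linear continuous map. -/
noncomputable def ctCLM (n : ℕ) :
    Matrix (Fin n) (Fin n) ℂ →L[ℝ] Matrix (Fin n) (Fin n) ℂ :=
  LinearMap.toContinuousLinearMap
    { toFun := fun X => Xᴴ
      map_add' := fun X Y => Matrix.conjTranspose_add X Y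
      map_smul' := fun r X => by
        ext i j
        simp [Matrix.conjTranspose_apply, star_smul] }

@[simp] lemma ctCLM_apply (X : Matrix (Fin n) (Fin n) ℂ) : ctCLM n X = Xᴴ := rfl

/-- Trace (as a complex number) as a real-linear continuous map. -/
noncomputable def trCLM (n : ℕ) : Matrix (Fin n) (Fin n) ℂ →L[ℝ] ℂ :=
  LinearMap.toContinuousLinearMap
    ((Matrix.traceLinearMap (Fin n) ℂ ℂ).restrictScalars ℝ)

@[simp] lemma trCLM_apply (X : Matrix (Fin n) (Fin n) ℂ) : trCLM n X = Matrix.trace X := rfl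

lemma hasFDerivAt_pow_gram (m : ℕ) (G : Matrix (Fin n) (Fin n) ℂ) :
    ∃ L : Matrix (Fin n) (Fin n) ℂ →L[ℝ] Matrix (Fin n) (Fin n) ℂ,
      HasFDerivAt (fun X : Matrix (Fin n) (Fin n) ℂ => (Xᴴ * X) ^ m) L G ∧
      ∀ H, L H = ∑ j ∈ Finset.range m,
        (Gᴴ * G) ^ j * (Hᴴ * G + Gᴴ * H) * (Gᴴ * G) ^ (m - 1 - j) := by
  induction m with
  | zero =>
      refine ⟨0, ?_, ?_⟩
      · simpa using (hasFDerivAt_const (1 : Matrix (Fin n) (Fin n) ℂ) G)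
      · simp
  | succ m ih =>
      obtain ⟨L, hL, hLf⟩ := ih
      have hct : HasFDerivAt (fun X : Matrix (Fin n) (Fin n) ℂ => Xᴴ) (ctCLM n) G :=
        (ctCLM n).hasFDerivAt
      have hid : HasFDerivAt (fun X : Matrix (Fin n) (Fin n) ℂ => X)
          (ContinuousLinearMap.id ℝ _) G := hasFDerivAt_id G
      have hQ : HasFDerivAt (fun X : Matrix (Fin n) (Fin n) ℂ => Xᴴ * X)
          ((mulB n).precompR _ (Gᴴ) (ContinuousLinearMap.id ℝ _) +
            (mulB n).precompL _ (ctCLM n) G) G :=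
        (mulB n).hasFDerivAt_of_bilinear hct hid
      have h := (mulB n).hasFDerivAt_of_bilinear hL hQ
      have hfun : (fun X : Matrix (Fin n) (Fin n) ℂ => (Xᴴ * X) ^ (m + 1)) =
          fun X => mulB n ((Xᴴ * X) ^ m) (Xᴴ * X) := by
        funext X; simp [pow_succ]
      refine ⟨_, by rw [hfun]; exact h, ?_⟩
      intro H
      change (Gᴴ * G) ^ m * (Gᴴ * H + Hᴴ * G) + L H * (Gᴴ * G) = _
      rw [hLf H]
      rw [Finset.sum_range_succ, Finset.sum_mul]
      have step : ∀ j ∈ Finset.range m,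
          (Gᴴ * G) ^ j * (Hᴴ * G + Gᴴ * H) * (Gᴴ * G) ^ (m - 1 - j) * (Gᴴ * G)
            = (Gᴴ * G) ^ j * (Hᴴ * G + Gᴴ * H) * (Gᴴ * G) ^ (m + 1 - 1 - j) := by
        intro j hj
        rw [Finset.mem_range] at hj
        rw [mul_assoc, ← pow_succ]
        congr 2
        omega
      rw [Finset.sum_congr rfl step]
      have : m + 1 - 1 - m = 0 := by omega
      rw [this, pow_zero, mul_one, add_comm (Gᴴ * H) (Hᴴ * G)]
      abel

lemma gramSq_eq_pow (s : ℕ) (X : Matrix (Fin n) (Fin n) ℂ) :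
    gramSq X (s + 1) = (Xᴴ * X) ^ (2 ^ s) := by
  induction s with
  | zero => simp [gramSq]
  | succ s ih =>
      have hherm : ((Xᴴ * X) ^ (2 ^ s))ᴴ = (Xᴴ * X) ^ (2 ^ s) :=
        ((Matrix.isHermitian_conjTranspose_mul_self X).pow (2 ^ s))
      calc gramSq X (s + 2) = (gramSq X (s + 1))ᴴ * gramSq X (s + 1) := rfl
        _ = ((Xᴴ * X) ^ (2 ^ s))ᴴ * (Xᴴ * X) ^ (2 ^ s) := by rw [ih]
        _ = (Xᴴ * X) ^ (2 ^ s) * (Xᴴ * X) ^ (2 ^ s) := by rw [hherm]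
        _ = (Xᴴ * X) ^ (2 ^ (s + 1)) := by rw [← pow_add]; congr 1; omega

lemma frobNorm_sq_eq (Y : Matrix (Fin n) (Fin n) ℂ) :
    frobNorm Y ^ 2 = (Matrix.trace (Yᴴ * Y)).re := by
  rw [frobNorm, Real.sq_sqrt]
  · rw [Matrix.trace]
    simp only [Matrix.diag_apply, Matrix.mul_apply, Matrix.conjTranspose_apply]
    rw [Complex.re_sum]
    rw [Finset.sum_comm]
    refine Finset.sum_congr rfl fun i _ => ?_
    rw [Complex.re_sum]
    refine Finset.sum_congr rfl fun j _ => ?_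
    rw [Complex.star_def, mul_comm, Complex.mul_conj]
    simp [Complex.sq_norm]
  · positivity

end Aux

/-- For a square complex matrix `G` and `t ≥ 1` (here paper index `t = s+1`), the (Wirtinger,
real-Fréchet) gradient of `X ↦ ‖X⁽ᵗ⁾‖_F²` at `G` is `2^t · G (Gᴴ G)^(2^(t-1) - 1)`, in the
sense that the Fréchet derivative acts as `H ↦ Re ⟨2^t · G (Gᴴ G)^(2^(t-1)-1), H⟩`. -/
theorem fderiv_frobSq_gramIter {n : ℕ} (s : ℕ) (G : Matrix (Fin n) (Fin n) ℂ) :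
    ∃ f' : Matrix (Fin n) (Fin n) ℂ →L[ℝ] ℝ,
      HasFDerivAt (fun X : Matrix (Fin n) (Fin n) ℂ => frobNorm (gramSq X s) ^ 2) f' G ∧
      ∀ H : Matrix (Fin n) (Fin n) ℂ,
        f' H = (((2 : ℕ) ^ (s + 1) : ℂ) *
          Matrix.trace ((G * (Gᴴ * G) ^ (2 ^ s - 1))ᴴ * H)).re := by
  set m := 2 ^ s with hm
  obtain ⟨L, hL, hLf⟩ := hasFDerivAt_pow_gram m G
  have hfun : (fun X : Matrix (Fin n) (Fin n) ℂ => frobNorm (gramSq X s) ^ 2) =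
      fun X => Complex.reCLM (trCLM n ((Xᴴ * X) ^ m)) := by
    funext X
    have h1 : frobNorm (gramSq X s) ^ 2 = (Matrix.trace ((gramSq X s)ᴴ * gramSq X s)).re :=
      frobNorm_sq_eq _
    have h2 : (gramSq X s)ᴴ * gramSq X s = (Xᴴ * X) ^ m := by
      have := gramSq_eq_pow s X
      rw [hm]
      rw [← this]
      rfl
    rw [h1, h2]
    rfl
  refine ⟨(Complex.reCLM.comp (trCLM n)).comp L, ?_, ?_⟩
  · rw [hfun]
    exact ((Complex.reCLM.comp (trCLM n)).hasFDerivAt.comp G hL)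
  · intro H
    have hQH : ((Gᴴ * G) ^ (m - 1))ᴴ = (Gᴴ * G) ^ (m - 1) :=
      (Matrix.isHermitian_conjTranspose_mul_self G).pow (m - 1)
    have hGQ : (G * (Gᴴ * G) ^ (m - 1))ᴴ = (Gᴴ * G) ^ (m - 1) * Gᴴ := by
      rw [Matrix.conjTranspose_mul, hQH]
    -- compute the trace of each summand
    have htr : ∀ j ∈ Finset.range m,
        Matrix.trace ((Gᴴ * G) ^ j * (Hᴴ * G + Gᴴ * H) * (Gᴴ * G) ^ (m - 1 - j))
          = Matrix.trace ((Gᴴ * G) ^ (m - 1) * (Hᴴ * G + Gᴴ * H)) := by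
      intro j hj
      rw [Finset.mem_range] at hj
      rw [Matrix.trace_mul_comm, ← mul_assoc, ← pow_add]
      congr 3
      omega
    have hL1 : (Complex.reCLM.comp (trCLM n)).comp L H
        = (Matrix.trace (L H)).re := rfl
    rw [hL1, hLf H]
    set Q := Gᴴ * G with hQdef
    set c := Matrix.trace (Q ^ (m - 1) * (Gᴴ * H)) with hc
    have hstar : Matrix.trace (Q ^ (m - 1) * (Hᴴ * G)) = star c := by
      rw [hc, ← Matrix.trace_conjTranspose, Matrix.conjTranspose_mul,
        Matrix.conjTranspose_mul, hQH, Matrix.conjTranspose_conjTranspose,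
        Matrix.trace_mul_comm]
    have hsum : Matrix.trace (∑ j ∈ Finset.range m,
        Q ^ j * (Hᴴ * G + Gᴴ * H) * Q ^ (m - 1 - j)) = (m : ℂ) * (star c + c) := by
      rw [Matrix.trace_sum, Finset.sum_congr rfl htr, Finset.sum_const,
        Finset.card_range, nsmul_eq_mul]
      rw [mul_add, Matrix.trace_add, hstar, hc]
    rw [hsum]
    have hcc : Matrix.trace ((G * Q ^ (2 ^ s - 1))ᴴ * H) = c := by
      rw [hGQ, mul_assoc]
    rw [hcc]
    have h2 : ((2 : ℕ) ^ (s + 1) : ℂ) = 2 * (m : ℂ) := by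
      rw [hm]; push_cast [pow_succ]; ring
    rw [h2]
    simp only [Complex.mul_re, Complex.mul_im, Complex.add_re, Complex.add_im,
      Complex.natCast_re, Complex.natCast_im, Complex.conj_re, Complex.conj_im,
      RCLike.star_def, Complex.re_ofNat, Complex.im_ofNat]
    ring
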